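/- (Deterministic core of Theorem 5.) Let A ∈ ℝ^{I×J} with singular value decomposition A = U Σ V^T (Σ diagonal with entries σ_1 ≥ ⋯ ≥ σ_r > 0, r = min{I,J}), let μ < r and q ≥ 1, and let G ∈ ℝ^{I×(μ+K)}. Write U^T G = [H; R] with H ∈ ℝ^{μ×(μ+K)} the top block. Assume H has full row rank. Define F = [H^† Σ_1^{−(2q−1)}, 0] V^T ∈ ℝ^{(μ+K)×J}, where Σ_1 = Σ(1:μ,1:μ). Then ‖(A A^T)^q G F − A‖_F ≤ ‖H^†‖_2 ‖R‖_2 σ_μ(A)^{−(2q−1)} · (∑_{i=μ+1}^{r} σ_i(A)^{4q})^{1/2} + (∑_{i=μ+1}^{r} σ_i(A)^2)^{1/2}, and ‖F‖_2 ≤ ‖H^†‖_2 / σ_μ(A)^{2q−1}. -/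

import Mathlib

/-!
Write `A = U Σ Vᵀ`. Then `(AAᵀ)^q = U Σ^{2q} Uᵀ` and `F = P Vᵀ` with `P = [H† Σ₁^{-(2q-1)}, 0]`,
so the residual is `U (Σ^{2q} Uᵀ G P - Σ) Vᵀ`, whose Frobenius norm is that of the middle factor.
Splitting the indices into the first `μ` and the last `r - μ` gives `Uᵀ G = [H; R]`; because
`H H† = 1` the upper blocks cancel, leaving only `Σ₂^{2q} R H† Σ₁^{-(2q-1)}` and `-Σ₂`. The first
is bounded by `‖Σ₂^{2q}‖_F ‖R‖₂ ‖H†‖₂ σ_μ^{-(2q-1)}`. For the second claim, `F Fᵀ` equals the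
Gram matrix of `H† Σ₁^{-(2q-1)}`, so the two have the same spectral norm.
-/

open Matrix
open scoped Matrix.Norms.L2Operator

noncomputable section

def frob {m n : Type*} [Fintype m] [Fintype n] (A : Matrix m n ℝ) : ℝ :=
  Real.sqrt (∑ i, ∑ j, (A i j) ^ 2)

def spec {m n : Type*} [Fintype m] [Fintype n] [DecidableEq n] (A : Matrix m n ℝ) : ℝ :=
  ‖LinearMap.toContinuousLinearMap (Matrix.toEuclideanLin A)‖

section SpectralNorm

variable {m n o : Type*} [Fintype m] [Fintype n] [Fintype o] [DecidableEq n]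

lemma spec_eq_norm (A : Matrix m n ℝ) : spec A = ‖A‖ := rfl

lemma spec_nonneg (A : Matrix m n ℝ) : 0 ≤ spec A := norm_nonneg _

lemma spec_mul_le [DecidableEq o] (A : Matrix m n ℝ) (B : Matrix n o ℝ) :
    spec (A * B) ≤ spec A * spec B :=
  l2_opNorm_mul A B

lemma spec_transpose [DecidableEq m] (A : Matrix m n ℝ) : spec Aᵀ = spec A := by
  rw [spec_eq_norm, spec_eq_norm, ← conjTranspose_eq_transpose_of_trivial,
    l2_opNorm_conjTranspose]

lemma spec_mul_transpose_self [DecidableEq m] (A : Matrix m n ℝ) :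
    spec (A * Aᵀ) = spec A ^ 2 := by
  have := l2_opNorm_conjTranspose_mul_self Aᵀ
  rw [conjTranspose_eq_transpose_of_trivial, transpose_transpose] at this
  rw [spec_eq_norm, this, ← spec_eq_norm, spec_transpose, sq]

lemma spec_eq_of_mul_transpose_eq [DecidableEq m] [DecidableEq o] {A : Matrix m n ℝ}
    {B : Matrix m o ℝ} (h : A * Aᵀ = B * Bᵀ) : spec A = spec B := by
  have := spec_mul_transpose_self A
  rw [h, spec_mul_transpose_self] at this
  exact (pow_left_inj₀ (spec_nonneg A) (spec_nonneg B) two_ne_zero).mp this.symm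

lemma spec_diagonal_le {d : n → ℝ} {c : ℝ} (hc : 0 ≤ c) (h : ∀ i, |d i| ≤ c) :
    spec (diagonal d) ≤ c := by
  rw [spec_eq_norm, l2_opNorm_diagonal]
  exact (pi_norm_le_iff_of_nonneg hc).mpr h

lemma sum_sq_vecMul_le [DecidableEq m] (v : m → ℝ) (B : Matrix m n ℝ) :
    ∑ j, (v ᵥ* B) j ^ 2 ≤ spec B ^ 2 * ∑ i, v i ^ 2 := by
  have h := l2_opNorm_mulVec Bᵀ (WithLp.toLp 2 v)
  rw [← spec_eq_norm, spec_transpose] at h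
  simp only [EuclideanSpace.norm_eq, Real.norm_eq_abs, sq_abs, mulVec_transpose] at h
  rw [← Real.sqrt_sq (spec_nonneg B), ← Real.sqrt_mul (sq_nonneg _)] at h
  exact (Real.sqrt_le_sqrt_iff (by positivity)).mp (by simpa using h)

end SpectralNorm

section FrobeniusNorm

variable {l m n o : Type*} [Fintype l] [Fintype m] [Fintype n] [Fintype o]

lemma frob_nonneg (A : Matrix m n ℝ) : 0 ≤ frob A := Real.sqrt_nonneg _

lemma frob_sq (A : Matrix m n ℝ) : frob A ^ 2 = ∑ i, ∑ j, A i j ^ 2 :=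
  Real.sq_sqrt (by positivity)

lemma frob_eq_sqrt_trace (A : Matrix m n ℝ) : frob A = √(Aᵀ * A).trace := by
  rw [frob, trace, Finset.sum_comm]
  simp only [diag, mul_apply, transpose_apply, sq]

lemma frob_mul_mul_transpose [DecidableEq m] [DecidableEq n] {U : Matrix l m ℝ}
    {V : Matrix o n ℝ} (hU : Uᵀ * U = 1) (hV : Vᵀ * V = 1) (M : Matrix m n ℝ) :
    frob (U * M * Vᵀ) = frob M := by
  rw [frob_eq_sqrt_trace, frob_eq_sqrt_trace]
  have h : (U * M * Vᵀ)ᵀ * (U * M * Vᵀ) = V * (Mᵀ * M * Vᵀ) := by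
    simp only [transpose_mul, transpose_transpose, Matrix.mul_assoc]
    rw [← Matrix.mul_assoc Uᵀ U, hU, Matrix.one_mul]
  rw [h, trace_mul_comm, Matrix.mul_assoc, hV, Matrix.mul_one]

lemma frob_submatrix_equiv (A : Matrix m n ℝ) (e₁ : l ≃ m) (e₂ : o ≃ n) :
    frob (A.submatrix e₁ e₂) = frob A := by
  unfold frob
  congr 1
  calc ∑ i, ∑ j, A.submatrix e₁ e₂ i j ^ 2 = ∑ i, ∑ j, A (e₁ i) j ^ 2 :=
        Finset.sum_congr rfl fun i _ => e₂.sum_comp fun j => A (e₁ i) j ^ 2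
    _ = ∑ i, ∑ j, A i j ^ 2 := e₁.sum_comp fun i => ∑ j, A i j ^ 2

lemma frob_neg (A : Matrix m n ℝ) : frob (-A) = frob A := by
  simp [frob]

lemma frob_diagonal [DecidableEq n] (d : n → ℝ) : frob (diagonal d) = √(∑ i, d i ^ 2) := by
  simp [frob, diagonal_apply, ite_pow]

lemma frob_fromBlocks_zero_zero_le (C : Matrix o l ℝ) (D : Matrix o m ℝ) :
    frob (fromBlocks (0 : Matrix n l ℝ) (0 : Matrix n m ℝ) C D) ≤ frob C + frob D := by
  have h : frob (fromBlocks (0 : Matrix n l ℝ) (0 : Matrix n m ℝ) C D) ^ 2 =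
      frob C ^ 2 + frob D ^ 2 := by
    simp [frob_sq, Fintype.sum_sum_type, Finset.sum_add_distrib]
  rw [← sq_le_sq₀ (frob_nonneg _) (add_nonneg (frob_nonneg C) (frob_nonneg D)), h]
  nlinarith [frob_nonneg C, frob_nonneg D]

lemma frob_mul_le [DecidableEq m] [DecidableEq n] (A : Matrix l m ℝ) (B : Matrix m n ℝ) :
    frob (A * B) ≤ frob A * spec B := by
  rw [← sq_le_sq₀ (frob_nonneg _) (mul_nonneg (frob_nonneg A) (spec_nonneg B)), mul_pow,
    frob_sq, frob_sq, mul_comm, Finset.mul_sum]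
  exact Finset.sum_le_sum fun i _ => sum_sq_vecMul_le (A i) B

end FrobeniusNorm

section Orthonormal

variable {m n r : Type*} [Fintype m] [Fintype n] [Fintype r] [DecidableEq m] [DecidableEq r]

lemma mul_mul_transpose_pow_succ {U : Matrix m r ℝ} (hU : Uᵀ * U = 1) (M : Matrix r r ℝ)
    (k : ℕ) : (U * M * Uᵀ) ^ (k + 1) = U * M ^ (k + 1) * Uᵀ := by
  induction k with
  | zero => simp
  | succ k ih =>
    calc (U * M * Uᵀ) ^ (k + 1 + 1) = U * M ^ (k + 1) * (Uᵀ * U) * M * Uᵀ := by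
          rw [pow_succ, ih]; simp only [Matrix.mul_assoc]
      _ = U * M ^ (k + 1 + 1) * Uᵀ := by
          rw [hU, Matrix.mul_one, pow_succ M (k + 1), Matrix.mul_assoc U]

lemma svd_mul_transpose_pow {U : Matrix m r ℝ} {V : Matrix n r ℝ} (hU : Uᵀ * U = 1)
    (hV : Vᵀ * V = 1) (σ : r → ℝ) {q : ℕ} (hq : q ≠ 0) :
    ((U * diagonal σ * Vᵀ) * (U * diagonal σ * Vᵀ)ᵀ) ^ q =
      U * diagonal (fun i => σ i ^ (2 * q)) * Uᵀ := by
  have hAAt : (U * diagonal σ * Vᵀ) * (U * diagonal σ * Vᵀ)ᵀ =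
      U * diagonal (fun i => σ i ^ 2) * Uᵀ := by
    simp only [transpose_mul, transpose_transpose, diagonal_transpose, Matrix.mul_assoc]
    rw [← Matrix.mul_assoc Vᵀ V, hV, Matrix.one_mul, ← Matrix.mul_assoc (diagonal σ),
      diagonal_mul_diagonal]
    simp only [sq]
  have hpow : (fun i => σ i ^ 2) ^ q = fun i => σ i ^ (2 * q) := by
    funext i; rw [Pi.pow_apply, ← pow_mul]
  obtain ⟨k, rfl⟩ := Nat.exists_eq_add_one_of_ne_zero hq
  rw [hAAt, mul_mul_transpose_pow_succ hU, diagonal_pow, hpow]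

lemma svd_residual_eq {k : Type*} [Fintype k] {U : Matrix m r ℝ} {V : Matrix n r ℝ}
    (hU : Uᵀ * U = 1) (hV : Vᵀ * V = 1) (σ : r → ℝ) {q : ℕ} (hq : q ≠ 0) (G : Matrix m k ℝ)
    (P : Matrix k r ℝ) :
    ((U * diagonal σ * Vᵀ) * (U * diagonal σ * Vᵀ)ᵀ) ^ q * G * (P * Vᵀ) -
        U * diagonal σ * Vᵀ =
      U * (diagonal (fun i => σ i ^ (2 * q)) * (Uᵀ * G) * P - diagonal σ) * Vᵀ := by
  rw [svd_mul_transpose_pow hU hV σ hq]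
  simp only [Matrix.mul_sub, Matrix.sub_mul, Matrix.mul_assoc]

end Orthonormal

lemma mul_transpose_mul_inv_of_rank_eq {m n : Type*} [Fintype m] [Fintype n] [DecidableEq m]
    {H : Matrix m n ℝ} (h : H.rank = Fintype.card m) : H * (Hᵀ * (H * Hᵀ)⁻¹) = 1 := by
  have hrange : LinearMap.range (H * Hᵀ).mulVecLin = ⊤ := by
    apply Submodule.eq_top_of_finrank_eq
    rw [← rank, rank_self_mul_transpose, h, Module.finrank_fintype_fun_eq_card]
  have hunit : IsUnit (H * Hᵀ).det := (isUnit_iff_isUnit_det _).mp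
    (mulVec_surjective_iff_isUnit.mp (LinearMap.range_eq_top.mp hrange))
  rw [← Matrix.mul_assoc, mul_nonsing_inv _ hunit]

lemma diagonal_eq_fromBlocks {m₁ m₂ : Type*} [DecidableEq m₁] [DecidableEq m₂]
    (d : m₁ ⊕ m₂ → ℝ) :
    diagonal d = fromBlocks (diagonal fun i => d (.inl i)) 0 0 (diagonal fun i => d (.inr i)) := by
  rw [fromBlocks_diagonal]
  congr 1 with (i | i) <;> rfl

lemma residual_eq_fromBlocks {m₁ m₂ k : Type*} [Fintype m₁] [Fintype m₂] [Fintype k]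
    [DecidableEq m₁] [DecidableEq m₂] {σ : m₁ ⊕ m₂ → ℝ} (hσ : ∀ i, σ (.inl i) ≠ 0)
    {n : ℕ} (hn : n ≠ 0) {H : Matrix m₁ k ℝ} (R : Matrix m₂ k ℝ) {Hdag : Matrix k m₁ ℝ}
    (hHdag : H * Hdag = 1) :
    diagonal (fun i => σ i ^ n) * fromRows H R *
        fromCols (Hdag * diagonal fun i => (σ (.inl i) ^ (n - 1))⁻¹) (0 : Matrix k m₂ ℝ) -
      diagonal σ =
    fromBlocks 0 0
      (diagonal (fun i => σ (.inr i) ^ n) *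
        (R * (Hdag * diagonal fun i => (σ (.inl i) ^ (n - 1))⁻¹)))
      (-diagonal fun i => σ (.inr i)) := by
  have hcancel : (diagonal fun i => σ (.inl i) ^ n) *
      (diagonal fun i => (σ (.inl i) ^ (n - 1))⁻¹) = diagonal fun i => σ (.inl i) := by
    rw [diagonal_mul_diagonal]
    congr 1 with i
    rw [← pow_sub₀ _ (hσ i) (Nat.sub_le n 1), Nat.sub_sub_self (Nat.one_le_iff_ne_zero.mpr hn),
      pow_one]
  rw [diagonal_eq_fromBlocks, diagonal_eq_fromBlocks σ, fromBlocks_mul_fromRows,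
    fromRows_mul_fromCols]
  simp only [Matrix.zero_mul, add_zero, zero_add, Matrix.mul_zero]
  rw [← Matrix.mul_assoc, Matrix.mul_assoc _ H, hHdag, Matrix.mul_one, hcancel,
    sub_eq_add_neg, fromBlocks_neg, fromBlocks_add]
  simp only [add_neg_cancel, neg_zero, add_zero, zero_add, Matrix.mul_assoc]

section FinSplit

variable {μ r : ℕ}

def finSumFinEquivOfLE (h : μ ≤ r) : Fin μ ⊕ Fin (r - μ) ≃ Fin r :=
  finSumFinEquiv.trans (finCongr (Nat.add_sub_cancel' h))

@[simp]
lemma finSumFinEquivOfLE_inl (h : μ ≤ r) (i : Fin μ) :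
    finSumFinEquivOfLE h (.inl i) = ⟨i, lt_of_lt_of_le i.isLt h⟩ := rfl

@[simp]
lemma finSumFinEquivOfLE_inr (h : μ ≤ r) (i : Fin (r - μ)) :
    finSumFinEquivOfLE h (.inr i) = ⟨μ + i, by omega⟩ := rfl

lemma sum_filter_le_eq_sum_inr (h : μ ≤ r) (f : Fin r → ℝ) :
    ∑ i ∈ Finset.univ.filter (fun i : Fin r => μ ≤ (i : ℕ)), f i =
      ∑ i : Fin (r - μ), f (finSumFinEquivOfLE h (.inr i)) := by
  rw [Finset.sum_filter, ← (finSumFinEquivOfLE h).sum_comp, Fintype.sum_sum_type]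
  simp only [finSumFinEquivOfLE_inr, le_add_iff_nonneg_right, zero_le, if_true,
    add_eq_right]
  exact Finset.sum_eq_zero fun i _ => if_neg (not_le.mpr i.isLt)

lemma frob_diagonal_comp_inr (h : μ ≤ r) (f : Fin r → ℝ) :
    frob (diagonal fun i => f (finSumFinEquivOfLE h (.inr i))) =
      √(∑ i ∈ Finset.univ.filter (fun i : Fin r => μ ≤ (i : ℕ)), f i ^ 2) := by
  rw [frob_diagonal, sum_filter_le_eq_sum_inr h]

def padCols {m : Type*} (r : ℕ) (X : Matrix m (Fin μ) ℝ) : Matrix m (Fin r) ℝ :=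
  of fun a j => if h : (j : ℕ) < μ then X a ⟨j, h⟩ else 0

lemma padCols_submatrix {m : Type*} (h : μ ≤ r) (X : Matrix m (Fin μ) ℝ) :
    (padCols r X).submatrix id (finSumFinEquivOfLE h) = fromCols X 0 := by
  ext a (j | j) <;> simp [padCols]

lemma padCols_mul_transpose {m : Type*} [Fintype m] (h : μ ≤ r) (X : Matrix m (Fin μ) ℝ) :
    padCols r X * (padCols r X)ᵀ = X * Xᵀ := by
  have hprod := submatrix_mul_equiv (padCols r X) (padCols r X)ᵀ id
    (finSumFinEquivOfLE h) id
  rw [submatrix_id_id, ← transpose_submatrix, padCols_submatrix, transpose_fromCols,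
    fromCols_mul_fromRows, transpose_zero, Matrix.mul_zero, add_zero] at hprod
  exact hprod.symm

lemma spec_padCols_mul_transpose {m n : Type*} [Fintype m] [Fintype n] [DecidableEq m]
    [DecidableEq n] (h : μ ≤ r) {V : Matrix n (Fin r) ℝ} (hV : Vᵀ * V = 1)
    (X : Matrix m (Fin μ) ℝ) : spec (padCols r X * Vᵀ) = spec X := by
  apply spec_eq_of_mul_transpose_eq
  rw [transpose_mul, transpose_transpose, Matrix.mul_assoc, ← Matrix.mul_assoc Vᵀ V, hV,
    Matrix.one_mul, padCols_mul_transpose h]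

lemma frob_residual_le {k : Type*} [Fintype k] (h : μ ≤ r) {σ : Fin r → ℝ}
    (hσ : ∀ i, σ i ≠ 0) {n : ℕ} (hn : n ≠ 0) {N : Matrix (Fin r) k ℝ} {H : Matrix (Fin μ) k ℝ}
    {R : Matrix (Fin (r - μ)) k ℝ} (hN : N.submatrix (finSumFinEquivOfLE h) id = fromRows H R)
    {Hdag : Matrix k (Fin μ) ℝ} (hHdag : H * Hdag = 1) :
    frob (diagonal (fun i => σ i ^ n) * N *
        padCols r (Hdag * diagonal fun i : Fin μ => (σ ⟨i, lt_of_lt_of_le i.isLt h⟩ ^ (n - 1))⁻¹) -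
        diagonal σ) ≤
      spec (R * (Hdag * diagonal fun i : Fin μ => (σ ⟨i, lt_of_lt_of_le i.isLt h⟩ ^ (n - 1))⁻¹)) *
          √(∑ i ∈ Finset.univ.filter (fun i : Fin r => μ ≤ (i : ℕ)), σ i ^ (2 * n)) +
        √(∑ i ∈ Finset.univ.filter (fun i : Fin r => μ ≤ (i : ℕ)), σ i ^ 2) := by
  set e := finSumFinEquivOfLE h
  rw [← frob_submatrix_equiv _ e e, submatrix_sub, Pi.sub_apply, Pi.sub_apply,
    submatrix_mul _ _ e id e Function.bijective_id, submatrix_mul _ _ e e id e.bijective,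
    submatrix_diagonal_equiv, submatrix_diagonal_equiv, hN, padCols_submatrix]
  refine (congrArg frob
    (residual_eq_fromBlocks (σ := σ ∘ e) (fun i => hσ _) hn R hHdag)).le.trans ?_
  have hpow : ∑ i ∈ Finset.univ.filter (fun i : Fin r => μ ≤ (i : ℕ)), σ i ^ (2 * n) =
      ∑ i ∈ Finset.univ.filter (fun i : Fin r => μ ≤ (i : ℕ)), (σ i ^ n) ^ 2 := by
    simp only [← pow_mul, mul_comm]
  calc _ ≤ frob (diagonal fun i => σ (e (.inr i)) ^ n) * spec (R * _) +
        frob (diagonal fun i => σ (e (.inr i))) :=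
        (frob_fromBlocks_zero_zero_le _ _).trans (add_le_add (frob_mul_le _ _) (frob_neg _).le)
    _ = _ := by
        rw [frob_diagonal_comp_inr h fun i => σ i ^ n, frob_diagonal_comp_inr h σ, hpow, mul_comm]
        rfl

end FinSplit

lemma spec_diagonal_inv_pow_le {μ r : ℕ} {σ : Fin r → ℝ} (hσpos : ∀ i, 0 < σ i)
    (hσmono : Antitone σ) (hμr : μ < r) (p : ℕ) :
    spec (diagonal fun i : Fin μ => (σ ⟨i, i.isLt.trans hμr⟩ ^ p)⁻¹) ≤
      (σ ⟨μ - 1, by omega⟩ ^ p)⁻¹ := by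
  refine spec_diagonal_le (inv_nonneg.mpr (pow_nonneg (hσpos _).le p)) fun i => ?_
  rw [abs_of_nonneg (inv_nonneg.mpr (pow_nonneg (hσpos _).le p))]
  exact inv_anti₀ (pow_pos (hσpos _) p)
    (pow_le_pow_left₀ (hσpos _).le (hσmono (Fin.mk_le_mk.mpr (by omega))) p)

-- Singular values are indexed from `0`: `σ_μ(A)` is `σ ⟨μ - 1, _⟩`, and `∑_{i=μ+1}^{r}` runs
-- over the indices `μ ≤ i`.
/-- Deterministic core of Theorem 5: given a thin SVD `A = U Σ Vᵀ` with positive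
descending singular values `σ`, the blocks `H` (top `μ` rows) and `R` (remaining rows)
of `Uᵀ G`, `H` of full row rank with pseudoinverse `H† = Hᵀ (H Hᵀ)⁻¹`, and
`F = [H† Σ₁^{−(2q−1)}, 0] Vᵀ`, one has the stated bounds.  (Singular values are 1-based
in the informal statement, so `σ_μ(A)` is `σ ⟨μ−1, _⟩` and `∑_{i=μ+1}^{r}` becomes the
sum over indices `i` with `μ ≤ i`.) -/
theorem stmt11 {I J r μ K : ℕ} (q : ℕ) (hq : 1 ≤ q)
    (hμr : μ < r)
    (A : Matrix (Fin I) (Fin J) ℝ)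
    (U : Matrix (Fin I) (Fin r) ℝ) (V : Matrix (Fin J) (Fin r) ℝ) (σ : Fin r → ℝ)
    (hU : Uᵀ * U = 1) (hV : Vᵀ * V = 1)
    (hσpos : ∀ i, 0 < σ i) (hσmono : Antitone σ)
    (hA : A = U * Matrix.diagonal σ * Vᵀ)
    (G : Matrix (Fin I) (Fin (μ + K)) ℝ)
    (H : Matrix (Fin μ) (Fin (μ + K)) ℝ) (R : Matrix (Fin (r - μ)) (Fin (μ + K)) ℝ)
    (hH : ∀ (i : Fin μ) (j : Fin (μ + K)),
      H i j = (Uᵀ * G) ⟨i, Nat.lt_trans i.isLt hμr⟩ j)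
    (hR : ∀ (i : Fin (r - μ)) (j : Fin (μ + K)),
      R i j = (Uᵀ * G) ⟨μ + i, by have := i.isLt; omega⟩ j)
    (hrank : H.rank = μ)
    (Hdag : Matrix (Fin (μ + K)) (Fin μ) ℝ) (hHdag : Hdag = Hᵀ * (H * Hᵀ)⁻¹)
    (F : Matrix (Fin (μ + K)) (Fin J) ℝ)
    (hF : F = (Matrix.of fun (a : Fin (μ + K)) (j : Fin r) =>
        if h : (j : ℕ) < μ then
          (Hdag * Matrix.diagonal (fun i : Fin μ =>
            (σ ⟨i, Nat.lt_trans i.isLt hμr⟩ ^ (2 * q - 1))⁻¹)) a ⟨j, h⟩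
        else 0) * Vᵀ) :
    frob ((A * Aᵀ) ^ q * G * F - A) ≤
        spec Hdag * spec R * (σ ⟨μ - 1, by omega⟩ ^ (2 * q - 1))⁻¹ *
            Real.sqrt (∑ i ∈ Finset.univ.filter (fun i : Fin r => μ ≤ (i : ℕ)),
              σ i ^ (4 * q)) +
          Real.sqrt (∑ i ∈ Finset.univ.filter (fun i : Fin r => μ ≤ (i : ℕ)), σ i ^ 2) ∧
      spec F ≤ spec Hdag / σ ⟨μ - 1, by omega⟩ ^ (2 * q - 1) := by
  set X := Hdag * diagonal fun i : Fin μ => (σ ⟨i, Nat.lt_trans i.isLt hμr⟩ ^ (2 * q - 1))⁻¹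
  obtain rfl : F = padCols r X * Vᵀ := hF
  subst hA
  have hHHdag : H * Hdag = 1 := hHdag ▸ mul_transpose_mul_inv_of_rank_eq (by simpa using hrank)
  have hrows : (Uᵀ * G).submatrix (finSumFinEquivOfLE hμr.le) id = fromRows H R := by
    ext (i | i) j <;> simp [hH, hR]
  have hX : spec X ≤ spec Hdag * (σ ⟨μ - 1, by omega⟩ ^ (2 * q - 1))⁻¹ :=
    (spec_mul_le _ _).trans <| mul_le_mul_of_nonneg_left
      (spec_diagonal_inv_pow_le hσpos hσmono hμr _) (spec_nonneg _)
  constructor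
  · rw [svd_residual_eq hU hV σ (by omega), frob_mul_mul_transpose hU hV,
      show 4 * q = 2 * (2 * q) by ring]
    refine (frob_residual_le hμr.le (fun i => (hσpos i).ne') (by omega) hrows hHHdag).trans ?_
    gcongr
    calc spec (R * X) ≤ spec R * spec X := spec_mul_le R X
      _ ≤ spec R * (spec Hdag * (σ ⟨μ - 1, by omega⟩ ^ (2 * q - 1))⁻¹) :=
          mul_le_mul_of_nonneg_left hX (spec_nonneg R)
      _ = _ := by ring
  · rw [spec_padCols_mul_transpose hμr.le hV, div_eq_mul_inv]
    exact hX

end
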